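/- Let 0 < ε < 1 and ρ_ε = (ε-1)/(ε+1). For m ∈ ℕ, the function μ(s) = 2cos(ms)/(1+ρ_ε^m) solves the integral equation (1/2)μ(s) - ∫_{0}^{2π} K^L(s,t;ε) μ(t) dt = cos(ms) for all s, where K^L(s,t;ε) = -(1/(2π)) ε/(1+ε²+(1-ε²)cos(s+t)). -/

import Mathlib

/-!
With `ρ = (ε - 1)/(ε + 1)` one has `ε / (1 + ε² + (1 - ε²) cos θ) = P_ρ(θ) / 2`, where
`P_ρ(θ) = (1 - ρ²)/(1 - 2ρ cos θ + ρ²)` is the Poisson kernel of the unit disc. The Poisson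
integral formula for the holomorphic function `z ↦ z ^ m` at the point `ρ e^{-is}` gives
`∫₀^{2π} P_ρ(s + t) cos(mt) dt = 2π ρ^m cos(ms)`, so the integral term equals
`-ρ^m cos(ms)/(1 + ρ^m)` and the equation reduces to `(1 + ρ^m)/(1 + ρ^m) = 1`.
-/

open Real MeasureTheory

lemma normSq_circleMap_sub_circleMap (r s t : ℝ) :
    Complex.normSq (circleMap 0 1 t - circleMap 0 r (-s)) =
      1 - 2 * r * Real.cos (s + t) + r ^ 2 := by
  simp only [Complex.normSq_apply, Complex.sub_re, Complex.sub_im, circleMap_zero_re,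
    circleMap_zero_im, Real.cos_neg, Real.sin_neg, Real.cos_add]
  nlinarith [Real.sin_sq_add_cos_sq t, Real.sin_sq_add_cos_sq s]

lemma poissonKernel_circleMap (r s t : ℝ) :
    poissonKernel 0 (circleMap 0 r (-s)) (circleMap 0 1 t) =
      (1 - r ^ 2) / (1 - 2 * r * Real.cos (s + t) + r ^ 2) := by
  simp only [poissonKernel_def, sub_zero, ← Complex.normSq_eq_norm_sq,
    normSq_circleMap_sub_circleMap]
  simp [Complex.normSq_eq_norm_sq, norm_circleMap_zero]

theorem integral_poissonKernel_mul_cos {r : ℝ} (hr : |r| < 1) (m : ℕ) (s : ℝ) :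
    ∫ t in (0:ℝ)..(2 * π),
        (1 - r ^ 2) / (1 - 2 * r * Real.cos (s + t) + r ^ 2) * Real.cos (m * t) =
      2 * π * r ^ m * Real.cos (m * s) := by
  set w := circleMap 0 r (-s)
  have hw : w ∈ Metric.ball 0 1 := by simpa [w, norm_circleMap_zero] using hr
  have hpoisson := (Differentiable.diffContOnCl (f := fun z : ℂ => z ^ m) (by fun_prop)
    (s := Metric.ball 0 1)).circleAverage_poissonKernel_smul hw
  have hint : CircleIntegrable (poissonKernel 0 w • fun z : ℂ => z ^ m) 0 1 := by
    apply ContinuousOn.circleIntegrable zero_le_one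
    rw [poissonKernel_eq_re_herglotzRieszKernel]
    have hcont := continuousOn_herglotzRieszKernel_sphere hw
    rw [abs_one] at hcont
    exact (Complex.continuous_re.comp_continuousOn hcont).smul (by fun_prop)
  have hre : ∀ t, ((poissonKernel 0 w • fun z : ℂ => z ^ m) (circleMap 0 1 t)).re =
      (1 - r ^ 2) / (1 - 2 * r * Real.cos (s + t) + r ^ 2) * Real.cos (m * t) := by
    intro t
    rw [Pi.smul_apply', poissonKernel_circleMap, Complex.smul_re, circleMap_zero_pow,
      circleMap_zero_re, one_pow, one_mul, smul_eq_mul]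
  have hreal := congrArg Complex.re hpoisson
  rw [← Complex.reCLM_apply, ← Complex.reCLM.circleAverage_comp_comm hint,
    circleAverage_def] at hreal
  simp only [Function.comp_apply, Complex.reCLM_apply, hre, smul_eq_mul, w, circleMap_zero_pow,
    circleMap_zero_re] at hreal
  rw [mul_neg, Real.cos_neg, inv_mul_eq_iff_eq_mul₀ (by positivity)] at hreal
  rw [hreal]
  ring

lemma abs_sub_one_div_add_one_lt_one {ε : ℝ} (hε : 0 < ε) : |(ε - 1) / (ε + 1)| < 1 := by
  rw [abs_div, abs_of_pos (by linarith : 0 < ε + 1), div_lt_one (by linarith), abs_lt]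
  constructor <;> linarith

lemma neg_one_lt_pow_of_abs_lt_one {x : ℝ} (hx : |x| < 1) (m : ℕ) : -1 < x ^ m := by
  rcases Nat.eq_zero_or_pos m with rfl | hm
  · norm_num
  · have hpow : |x ^ m| < 1 := by
      rw [abs_pow]
      exact pow_lt_one₀ (abs_nonneg x) hx hm.ne'
    exact (abs_lt.mp hpow).1

lemma poisson_ratio_sub_one_div_add_one {ε : ℝ} (hε : ε + 1 ≠ 0) (c : ℝ) :
    (1 - ((ε - 1) / (ε + 1)) ^ 2) /
        (1 - 2 * ((ε - 1) / (ε + 1)) * c + ((ε - 1) / (ε + 1)) ^ 2) =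
      2 * ε / (1 + ε ^ 2 + (1 - ε ^ 2) * c) := by
  have hk : 2 / (ε + 1) ^ 2 ≠ 0 := by positivity
  rw [show 1 - ((ε - 1) / (ε + 1)) ^ 2 = 2 * ε * (2 / (ε + 1) ^ 2) by field_simp; ring,
    show 1 - 2 * ((ε - 1) / (ε + 1)) * c + ((ε - 1) / (ε + 1)) ^ 2 =
      (1 + ε ^ 2 + (1 - ε ^ 2) * c) * (2 / (ε + 1) ^ 2) by field_simp; ring,
    mul_div_mul_right _ _ hk]

theorem stmt_3_general (ε : ℝ) (hε : 0 < ε) (m : ℕ) (s : ℝ) :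
    (1 / 2) * (2 * Real.cos (m * s) / (1 + ((ε - 1) / (ε + 1)) ^ m)) -
      ∫ t in (0:ℝ)..(2 * π),
        (-(1 / (2 * π)) * ε / (1 + ε ^ 2 + (1 - ε ^ 2) * Real.cos (s + t))) *
          (2 * Real.cos (m * t) / (1 + ((ε - 1) / (ε + 1)) ^ m))
    = Real.cos (m * s) := by
  have hρ := abs_sub_one_div_add_one_lt_one hε
  set ρ := (ε - 1) / (ε + 1)
  have hq : 1 + ρ ^ m ≠ 0 :=
    (by linarith [neg_one_lt_pow_of_abs_lt_one hρ m] : 0 < 1 + ρ ^ m).ne'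
  have hkernel : ∀ t, -(1 / (2 * π)) * ε / (1 + ε ^ 2 + (1 - ε ^ 2) * Real.cos (s + t)) *
      (2 * Real.cos (m * t) / (1 + ρ ^ m)) = -(1 / (2 * π * (1 + ρ ^ m))) *
        ((1 - ρ ^ 2) / (1 - 2 * ρ * Real.cos (s + t) + ρ ^ 2) * Real.cos (m * t)) := by
    intro t
    rw [poisson_ratio_sub_one_div_add_one (by linarith) (Real.cos (s + t))]
    field_simp
  rw [intervalIntegral.integral_congr (fun t _ => hkernel t), intervalIntegral.integral_const_mul,
    integral_poissonKernel_mul_cos hρ]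
  field_simp
  ring

/-- For `m : ℕ`, `μ(s) = 2 cos(ms)/(1+ρ_ε^m)` solves
`(1/2)μ(s) - ∫₀^{2π} K^L(s,t;ε) μ(t) dt = cos(ms)`. -/
theorem stmt_3 (ε : ℝ) (hε : 0 < ε) (hε1 : ε < 1) (m : ℕ) (s : ℝ) :
    (1 / 2) * (2 * Real.cos (m * s) / (1 + ((ε - 1) / (ε + 1)) ^ m)) -
      ∫ t in (0:ℝ)..(2 * π),
        (-(1 / (2 * π)) * ε / (1 + ε ^ 2 + (1 - ε ^ 2) * Real.cos (s + t))) *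
          (2 * Real.cos (m * t) / (1 + ((ε - 1) / (ε + 1)) ^ m))
    = Real.cos (m * s) :=
  stmt_3_general ε hε m s
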